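/- Let W be a cofinite isotropic subspace of Ĥ and L a lagrangian with dim(L ∩ W) = k < ∞ and L + W closed. Then dim(L ∩ W^ω) = k + (1/2)dim H_W, and L ∩ W^ω decomposes orthogonally as (L ∩ W) ⊕ (L ∩ (V⊥ ⊕ H_W)), where V = L ∩ W and V⊥ is the orthogonal complement of V in W. -/

import Mathlib

/-!
Let `P` be the orthogonal projection onto `H_W` and `L_W = P (L ∩ W^ω)`. Since `W` is closed and
isotropic, `W^ω = W ⊕ H_W` orthogonally, so `P` restricted to `L ∩ W^ω` has kernel `L ∩ W`, and
the form `⟪J ·, ·⟫`, which vanishes on `L`, descends to `W^ω / W ≅ H_W`: thus `L_W` is isotropic.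
As `L + W` is closed, `(J (L ∩ W^ω))⊥ = L + W`, which yields `(J L_W)⊥ ∩ H_W ⊆ L_W`; hence
`H_W = J L_W ⊕ L_W` and `dim H_W = 2 dim L_W`, while rank–nullity gives
`dim (L ∩ W^ω) = k + dim L_W`. The decomposition is the modular law applied to
`W^ω = (L ∩ W) ⊕ (W ⊖ (L ∩ W)) ⊕ H_W`.
-/

noncomputable section

variable (H : Type) [NormedAddCommGroup H] [InnerProductSpace ℂ H] [CompleteSpace H]

/-- `Ĥ = H ⊕ H` with the Hilbert (l²) structure. -/
abbrev Hh := WithLp 2 (H × H)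

/-- The complex structure `J(x,y) = (y, -x)` on `Ĥ = H ⊕ H`. -/
def hatJ : Hh H →L[ℂ] Hh H :=
  (WithLp.prodContinuousLinearEquiv 2 ℂ H H).symm.toContinuousLinearMap ∘L
    ((ContinuousLinearMap.snd ℂ H H).prod (-(ContinuousLinearMap.fst ℂ H H))) ∘L
    (WithLp.prodContinuousLinearEquiv 2 ℂ H H).toContinuousLinearMap

/-- A subspace `L ⊆ Ĥ` is lagrangian if `JL = L⊥`. -/
def IsLagrangian (L : Submodule ℂ (Hh H)) : Prop :=
  L.map (hatJ H).toLinearMap = Lᗮ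

/-- The annihilator `W^ω = (JW)⊥` of an isotropic subspace `W`. -/
def annihilator (W : Submodule ℂ (Hh H)) : Submodule ℂ (Hh H) :=
  (W.map (hatJ H).toLinearMap)ᗮ

/-- The symplectically reduced space `H_W = (W ⊕ JW)⊥`. -/
def reducedSpace (W : Submodule ℂ (Hh H)) : Submodule ℂ (Hh H) :=
  (W ⊔ W.map (hatJ H).toLinearMap)ᗮ

end

namespace Submodule

variable {K V V₂ : Type*} [DivisionRing K] [AddCommGroup V] [Module K V] [AddCommGroup V₂]
  [Module K V₂]

theorem finiteDimensional_of_map_of_inf_ker (f : V →ₗ[K] V₂) (p : Submodule K V)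
    [FiniteDimensional K (p.map f)] [FiniteDimensional K ↥(p ⊓ LinearMap.ker f)] :
    FiniteDimensional K p :=
  (fg_iff_finiteDimensional p).1 <| fg_of_fg_map_of_fg_inf_ker f
    ((fg_iff_finiteDimensional _).2 inferInstance) ((fg_iff_finiteDimensional _).2 inferInstance)

theorem finrank_map_add_finrank_inf_ker (f : V →ₗ[K] V₂) (p : Submodule K V)
    [FiniteDimensional K p] :
    Module.finrank K (p.map f) + Module.finrank K ↥(p ⊓ LinearMap.ker f) = Module.finrank K p := by
  have h := (f.domRestrict p).finrank_range_add_finrank_ker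
  rwa [LinearMap.range_domRestrict, LinearMap.ker_domRestrict, ← finrank_map_subtype_eq,
    map_comap_subtype] at h

end Submodule

section

variable {H : Type} [NormedAddCommGroup H] [InnerProductSpace ℂ H]

def IsIsotropic (W : Submodule ℂ (Hh H)) : Prop :=
  W.map (hatJ H).toLinearMap ≤ Wᗮ

theorem hatJ_hatJ (x : Hh H) : hatJ H (hatJ H x) = -x := rfl

theorem hatJ_injective : Function.Injective (hatJ H) := fun x y h => by
  simpa [hatJ_hatJ] using congrArg (hatJ H) h

theorem inner_hatJ_left (x y : Hh H) : inner ℂ (hatJ H x) y = -inner ℂ x (hatJ H y) := by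
  change inner ℂ x.snd y.fst + inner ℂ (-x.fst) y.snd =
    -(inner ℂ x.fst y.snd + inner ℂ x.snd (-y.fst))
  rw [inner_neg_left, inner_neg_right]
  ring

theorem inner_hatJ_hatJ (x y : Hh H) : inner ℂ (hatJ H x) (hatJ H y) = inner ℂ x y := by
  rw [inner_hatJ_left, hatJ_hatJ, inner_neg_right, neg_neg]

theorem map_hatJ_map_hatJ (S : Submodule ℂ (Hh H)) :
    (S.map (hatJ H).toLinearMap).map (hatJ H).toLinearMap = S := by
  have hJJ : (hatJ H).toLinearMap ∘ₗ (hatJ H).toLinearMap = -LinearMap.id := by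
    ext x
    exact hatJ_hatJ x
  rw [← Submodule.map_comp, hJJ, Submodule.map_neg, Submodule.map_id]

theorem map_hatJ_orthogonal (S : Submodule ℂ (Hh H)) :
    Sᗮ.map (hatJ H).toLinearMap = (S.map (hatJ H).toLinearMap)ᗮ := by
  have hrange : LinearMap.range (hatJ H).toLinearMap = ⊤ :=
    LinearMap.range_eq_top.2 fun x => ⟨-hatJ H x, by simp [hatJ_hatJ]⟩
  simpa [hrange] using S.map_orthogonal ((hatJ H).toLinearMap.isometryOfInner inner_hatJ_hatJ)

theorem finrank_map_hatJ (S : Submodule ℂ (Hh H)) :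
    Module.finrank ℂ (S.map (hatJ H).toLinearMap) = Module.finrank ℂ S :=
  (Submodule.equivMapOfInjective _ hatJ_injective S).finrank_eq.symm

variable {W L : Submodule ℂ (Hh H)}

theorem IsLagrangian.orthogonal_map_hatJ (hL : IsLagrangian H L) :
    (L.map (hatJ H).toLinearMap)ᗮ = L := by
  rw [← map_hatJ_orthogonal, ← hL, map_hatJ_map_hatJ]

theorem IsLagrangian.inner_hatJ_eq_zero (hL : IsLagrangian H L) {x y : Hh H} (hx : x ∈ L)
    (hy : y ∈ L) : inner ℂ (hatJ H x) y = 0 :=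
  Submodule.inner_left_of_mem_orthogonal hy (hL ▸ Submodule.mem_map_of_mem hx)

theorem IsLagrangian.map_hatJ_inf_annihilator (hL : IsLagrangian H L) :
    (L ⊓ annihilator H W).map (hatJ H).toLinearMap = (L ⊔ W)ᗮ := by
  rw [annihilator, ← hL.orthogonal_map_hatJ, Submodule.inf_orthogonal, ← Submodule.map_sup,
    map_hatJ_orthogonal, map_hatJ_map_hatJ, hL.orthogonal_map_hatJ]

theorem annihilator_inf_orthogonal : annihilator H W ⊓ Wᗮ = reducedSpace H W := by
  rw [annihilator, reducedSpace, sup_comm, Submodule.inf_orthogonal]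

theorem reducedSpace_le_annihilator : reducedSpace H W ≤ annihilator H W :=
  annihilator_inf_orthogonal.symm.trans_le inf_le_left

theorem reducedSpace_le_orthogonal : reducedSpace H W ≤ Wᗮ :=
  annihilator_inf_orthogonal.symm.trans_le inf_le_right

theorem le_orthogonal_reducedSpace : W ≤ (reducedSpace H W)ᗮ :=
  le_sup_left.trans (Submodule.le_orthogonal_orthogonal _)

theorem map_hatJ_reducedSpace :
    (reducedSpace H W).map (hatJ H).toLinearMap = reducedSpace H W := by
  rw [reducedSpace, map_hatJ_orthogonal, Submodule.map_sup, map_hatJ_map_hatJ, sup_comm]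

theorem IsIsotropic.le_annihilator (hW : IsIsotropic W) : W ≤ annihilator H W :=
  Submodule.isOrtho_comm.mp hW

/-- The form `⟪J ·, ·⟫` on `W^ω` descends to `W^ω / W`. -/
theorem IsIsotropic.inner_hatJ_add_add (hW : IsIsotropic W) {x y w₁ w₂ : Hh H}
    (hx : x ∈ annihilator H W) (hy : y ∈ annihilator H W) (hw₁ : w₁ ∈ W) (hw₂ : w₂ ∈ W) :
    inner ℂ (hatJ H (x + w₁)) (y + w₂) = inner ℂ (hatJ H x) y := by
  have hJw : ∀ {w z}, w ∈ W → z ∈ annihilator H W → inner ℂ (hatJ H w) z = 0 :=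
    fun hw hz => Submodule.inner_right_of_mem_orthogonal (Submodule.mem_map_of_mem hw) hz
  have hxw₂ : inner ℂ (hatJ H x) w₂ = 0 := by
    rw [inner_hatJ_left, inner_eq_zero_symm.1 (hJw hw₂ hx), neg_zero]
  rw [map_add, inner_add_left, inner_add_right, inner_add_right, hxw₂,
    hJw hw₁ hy, hJw hw₁ (hW.le_annihilator hw₂)]
  ring

end

noncomputable section

variable {H : Type} [NormedAddCommGroup H] [InnerProductSpace ℂ H] [CompleteSpace H]
  {W L : Submodule ℂ (Hh H)}

instance : (reducedSpace H W).HasOrthogonalProjection :=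
  have : CompleteSpace (reducedSpace H W) := Submodule.instOrthogonalCompleteSpace _
  .ofCompleteSpace _

theorem sup_reducedSpace (hWc : IsClosed (W : Set (Hh H))) (hW : IsIsotropic W) :
    W ⊔ reducedSpace H W = annihilator H W := by
  have : CompleteSpace W := hWc.completeSpace_coe
  rw [← annihilator_inf_orthogonal, inf_comm]
  exact Submodule.sup_orthogonal_inf_of_hasOrthogonalProjection hW.le_annihilator

theorem annihilator_inf_orthogonal_reducedSpace (hWc : IsClosed (W : Set (Hh H)))
    (hW : IsIsotropic W) : annihilator H W ⊓ (reducedSpace H W)ᗮ = W := by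
  rw [← sup_reducedSpace hWc hW, sup_inf_assoc_of_le _ le_orthogonal_reducedSpace,
    Submodule.inf_orthogonal_eq_bot, sup_bot_eq]

theorem sub_starProjection_reducedSpace_mem (hWc : IsClosed (W : Set (Hh H)))
    (hW : IsIsotropic W) {x : Hh H} (hx : x ∈ annihilator H W) :
    x - (reducedSpace H W).starProjection x ∈ W := by
  have hPx : (reducedSpace H W).starProjection x ∈ annihilator H W :=
    reducedSpace_le_annihilator (Submodule.starProjection_apply_mem _ x)
  exact (annihilator_inf_orthogonal_reducedSpace hWc hW).le
    ⟨Submodule.sub_mem _ hx hPx, Submodule.sub_starProjection_mem_orthogonal x⟩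

theorem starProjection_reducedSpace_eq_zero {w : Hh H} (hw : w ∈ W) :
    (reducedSpace H W).starProjection w = 0 :=
  (Submodule.starProjection_apply_eq_zero_iff _).2 (le_orthogonal_reducedSpace hw)

variable (W L) in
def reducedLagrangian : Submodule ℂ (Hh H) :=
  (L ⊓ annihilator H W).map (reducedSpace H W).starProjection.toLinearMap

theorem reducedLagrangian_le_reducedSpace : reducedLagrangian W L ≤ reducedSpace H W := by
  rintro _ ⟨x, -, rfl⟩
  exact Submodule.starProjection_apply_mem _ x

theorem inf_annihilator_le_sup_reducedLagrangian (hWc : IsClosed (W : Set (Hh H)))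
    (hW : IsIsotropic W) : L ⊓ annihilator H W ≤ reducedLagrangian W L ⊔ W := fun _ hx =>
  Submodule.mem_sup.2 ⟨_, Submodule.mem_map_of_mem hx, _,
    sub_starProjection_reducedSpace_mem hWc hW hx.2, add_sub_cancel _ _⟩

theorem sup_inf_reducedSpace_le_reducedLagrangian (hW : IsIsotropic W) :
    (L ⊔ W) ⊓ reducedSpace H W ≤ reducedLagrangian W L := by
  rintro h ⟨hlw, hh⟩
  obtain ⟨l, hl, w, hw, rfl⟩ := Submodule.mem_sup.1 hlw
  have hlω : l ∈ annihilator H W := by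
    simpa using Submodule.sub_mem _ (reducedSpace_le_annihilator hh) (hW.le_annihilator hw)
  refine ⟨l, ⟨hl, hlω⟩, ?_⟩
  calc (reducedSpace H W).starProjection l
      = (reducedSpace H W).starProjection (l + w) - (reducedSpace H W).starProjection w := by
        rw [map_add, add_sub_cancel_right]
    _ = l + w := by
        rw [Submodule.starProjection_eq_self_iff.2 hh, starProjection_reducedSpace_eq_zero hw,
          sub_zero]

theorem inner_hatJ_reducedLagrangian (hWc : IsClosed (W : Set (Hh H))) (hW : IsIsotropic W)
    (hL : IsLagrangian H L) {a b : Hh H} (ha : a ∈ reducedLagrangian W L)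
    (hb : b ∈ reducedLagrangian W L) : inner ℂ (hatJ H a) b = 0 := by
  obtain ⟨x, hx, rfl⟩ := ha
  obtain ⟨y, hy, rfl⟩ := hb
  simp only [ContinuousLinearMap.coe_coe]
  have hPω : ∀ z, (reducedSpace H W).starProjection z ∈ annihilator H W := fun z =>
    reducedSpace_le_annihilator (Submodule.starProjection_apply_mem _ z)
  rw [← hW.inner_hatJ_add_add (hPω x) (hPω y) (sub_starProjection_reducedSpace_mem hWc hW hx.2)
    (sub_starProjection_reducedSpace_mem hWc hW hy.2), add_sub_cancel, add_sub_cancel]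
  exact hL.inner_hatJ_eq_zero hx.1 hy.1

theorem orthogonal_map_hatJ_reducedLagrangian_inf_le (hWc : IsClosed (W : Set (Hh H)))
    (hW : IsIsotropic W) (hL : IsLagrangian H L)
    (hLW : IsClosed ((L ⊔ W : Submodule ℂ (Hh H)) : Set (Hh H))) :
    ((reducedLagrangian W L).map (hatJ H).toLinearMap)ᗮ ⊓ reducedSpace H W ≤
      reducedLagrangian W L := by
  have h : ((reducedLagrangian W L).map (hatJ H).toLinearMap)ᗮ ⊓ reducedSpace H W ≤ L ⊔ W :=
    calc ((reducedLagrangian W L).map (hatJ H).toLinearMap)ᗮ ⊓ reducedSpace H W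
        ≤ ((reducedLagrangian W L).map (hatJ H).toLinearMap)ᗮ ⊓ annihilator H W :=
          inf_le_inf_left _ reducedSpace_le_annihilator
      _ = ((reducedLagrangian W L ⊔ W).map (hatJ H).toLinearMap)ᗮ := by
          rw [annihilator, Submodule.inf_orthogonal, Submodule.map_sup]
      _ ≤ ((L ⊓ annihilator H W).map (hatJ H).toLinearMap)ᗮ :=
          Submodule.orthogonal_le <|
            Submodule.map_mono (inf_annihilator_le_sup_reducedLagrangian hWc hW)
      _ = L ⊔ W := by
          rw [hL.map_hatJ_inf_annihilator, Submodule.orthogonal_orthogonal_eq_closure,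
            hLW.submodule_topologicalClosure_eq]
  exact (le_inf h inf_le_right).trans (sup_inf_reducedSpace_le_reducedLagrangian hW)

theorem finrank_reducedSpace [FiniteDimensional ℂ (reducedSpace H W)]
    (hWc : IsClosed (W : Set (Hh H))) (hW : IsIsotropic W) (hL : IsLagrangian H L)
    (hLW : IsClosed ((L ⊔ W : Submodule ℂ (Hh H)) : Set (Hh H))) :
    Module.finrank ℂ (reducedSpace H W) = 2 * Module.finrank ℂ (reducedLagrangian W L) := by
  have hJ : (reducedLagrangian W L).map (hatJ H).toLinearMap ≤ reducedSpace H W :=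
    map_hatJ_reducedSpace (W := W) ▸ Submodule.map_mono reducedLagrangian_le_reducedSpace
  have hisotropic :
      reducedLagrangian W L ≤ ((reducedLagrangian W L).map (hatJ H).toLinearMap)ᗮ := by
    rintro b hb _ ⟨a, ha, rfl⟩
    exact inner_hatJ_reducedLagrangian hWc hW hL ha hb
  have hcomplement : ((reducedLagrangian W L).map (hatJ H).toLinearMap)ᗮ ⊓ reducedSpace H W =
      reducedLagrangian W L :=
    le_antisymm (orthogonal_map_hatJ_reducedLagrangian_inf_le hWc hW hL hLW)
      (le_inf hisotropic reducedLagrangian_le_reducedSpace)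
  have h := Submodule.finrank_add_inf_finrank_orthogonal hJ
  rw [hcomplement, finrank_map_hatJ] at h
  omega

theorem inf_annihilator_inf_ker (hWc : IsClosed (W : Set (Hh H))) (hW : IsIsotropic W) :
    L ⊓ annihilator H W ⊓ LinearMap.ker (reducedSpace H W).starProjection.toLinearMap = L ⊓ W := by
  rw [Submodule.ker_starProjection, inf_assoc, annihilator_inf_orthogonal_reducedSpace hWc hW]

theorem finiteDimensional_inf_annihilator [FiniteDimensional ℂ (reducedSpace H W)]
    [FiniteDimensional ℂ ↥(L ⊓ W)] (hWc : IsClosed (W : Set (Hh H))) (hW : IsIsotropic W) :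
    FiniteDimensional ℂ ↥(L ⊓ annihilator H W) := by
  have : FiniteDimensional ℂ
      ((L ⊓ annihilator H W).map (reducedSpace H W).starProjection.toLinearMap) :=
    Submodule.finiteDimensional_of_le reducedLagrangian_le_reducedSpace
  have : FiniteDimensional ℂ
      ↥(L ⊓ annihilator H W ⊓ LinearMap.ker (reducedSpace H W).starProjection.toLinearMap) := by
    rwa [inf_annihilator_inf_ker hWc hW]
  exact Submodule.finiteDimensional_of_map_of_inf_ker
    (reducedSpace H W).starProjection.toLinearMap (L ⊓ annihilator H W)

theorem finrank_inf_annihilator [FiniteDimensional ℂ (reducedSpace H W)]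
    [FiniteDimensional ℂ ↥(L ⊓ W)] (hWc : IsClosed (W : Set (Hh H))) (hW : IsIsotropic W) :
    Module.finrank ℂ ↥(L ⊓ annihilator H W) =
      Module.finrank ℂ (reducedLagrangian W L) + Module.finrank ℂ ↥(L ⊓ W) := by
  have := finiteDimensional_inf_annihilator (L := L) hWc hW
  rw [← Submodule.finrank_map_add_finrank_inf_ker (reducedSpace H W).starProjection.toLinearMap,
    inf_annihilator_inf_ker hWc hW]
  rfl

theorem inf_annihilator_eq_sup [(L ⊓ W).HasOrthogonalProjection]
    (hWc : IsClosed (W : Set (Hh H))) (hW : IsIsotropic W) :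
    L ⊓ annihilator H W = (L ⊓ W) ⊔ (L ⊓ ((W ⊓ (L ⊓ W)ᗮ) ⊔ reducedSpace H W)) := by
  have hW' : (L ⊓ W) ⊔ (W ⊓ (L ⊓ W)ᗮ) = W := by
    rw [inf_comm W]
    exact Submodule.sup_orthogonal_inf_of_hasOrthogonalProjection inf_le_right
  calc L ⊓ annihilator H W = ((L ⊓ W) ⊔ ((W ⊓ (L ⊓ W)ᗮ) ⊔ reducedSpace H W)) ⊓ L := by
        rw [← sup_assoc, hW', sup_reducedSpace hWc hW, inf_comm]
    _ = (L ⊓ W) ⊔ ((W ⊓ (L ⊓ W)ᗮ) ⊔ reducedSpace H W) ⊓ L := sup_inf_assoc_of_le _ inf_le_left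
    _ = (L ⊓ W) ⊔ (L ⊓ ((W ⊓ (L ⊓ W)ᗮ) ⊔ reducedSpace H W)) := congrArg (L ⊓ W ⊔ ·) (inf_comm _ _)

end

variable (H : Type) [NormedAddCommGroup H] [InnerProductSpace ℂ H] [CompleteSpace H]

/-- let `W` be a cofinite isotropic subspace and `L` a lagrangian with
`dim (L ∩ W) = k < ∞` and `L + W` closed. Then
`dim (L ∩ W^ω) = k + (1/2) dim H_W` (stated doubled to avoid division), and `L ∩ W^ω`
decomposes orthogonally as `(L ∩ W) ⊕ (L ∩ (V⊥ ⊕ H_W))`, where `V = L ∩ W` and `V⊥` is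
the orthogonal complement of `V` in `W`. -/
theorem dim_inter_annihilator (W : Submodule ℂ (Hh H))
    (hisoc : IsClosed (W : Set (Hh H)))
    (hiso : W.map (hatJ H).toLinearMap ≤ Wᗮ)
    [FiniteDimensional ℂ ↥(reducedSpace H W)]
    (L : Submodule ℂ (Hh H)) (hL : IsLagrangian H L)
    (k : ℕ) [FiniteDimensional ℂ ↥(L ⊓ W)]
    (hk : Module.finrank ℂ ↥(L ⊓ W) = k)
    (hclosed : IsClosed ((L ⊔ W : Submodule ℂ (Hh H)) : Set (Hh H))) :
    FiniteDimensional ℂ ↥(L ⊓ annihilator H W) ∧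
    2 * Module.finrank ℂ ↥(L ⊓ annihilator H W) =
      2 * k + Module.finrank ℂ ↥(reducedSpace H W) ∧
    L ⊓ annihilator H W =
      (L ⊓ W) ⊔ (L ⊓ ((W ⊓ (L ⊓ W)ᗮ) ⊔ reducedSpace H W)) ∧
    (L ⊓ ((W ⊓ (L ⊓ W)ᗮ) ⊔ reducedSpace H W)) ≤ (L ⊓ W)ᗮ := by
  have hrank := finrank_inf_annihilator (L := L) hisoc hiso
  have hreduced := finrank_reducedSpace hisoc hiso hL hclosed
  refine ⟨finiteDimensional_inf_annihilator hisoc hiso, by omega,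
    inf_annihilator_eq_sup hisoc hiso, ?_⟩
  exact inf_le_right.trans <| sup_le inf_le_right <|
    reducedSpace_le_orthogonal.trans (Submodule.orthogonal_le inf_le_right)
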